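/- arXiv:1903.01464 — 3 statements merged into one kernel-verified Lean document; each statement's English description precedes it below -/
import Mathlib

section
/- If every interaction score is at least the cooperative threshold, i.e. ϑ_i ≥ θ_co for all i with 0 < θ_co < 1, then the Experience value satisfies the geometric bound 0 < 1 - Exp_t ≤ (1 - Exp_0)·(1 - θ_co·α)^t for every t ≥ 0. -/
/-! The gap `1 - Exp t` obeys the multiplicative recurrence
`1 - Exp (t + 1) = (1 - ϑ (t + 1) * α) * (1 - Exp t)`, whose factors lie in `(0, 1 - θco * α]`;
so the gap stays positive and shrinks at least geometrically with ratio `1 - θco * α`. -/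

section MulRecurrence

variable {u r : ℕ → ℝ}

theorem pos_of_succ_eq_mul (hu : ∀ t, u (t + 1) = r t * u t) (hr : ∀ t, 0 < r t)
    (h0 : 0 < u 0) : ∀ t, 0 < u t
  | 0 => h0
  | t + 1 => hu t ▸ mul_pos (hr t) (pos_of_succ_eq_mul hu hr h0 t)

theorem le_pow_mul_of_succ_eq_mul (hu : ∀ t, u (t + 1) = r t * u t) (hr : ∀ t, 0 < r t) {c : ℝ}
    (hrc : ∀ t, r t ≤ c) (h0 : 0 < u 0) (t : ℕ) :
    u t ≤ c ^ t * u 0 :=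
  le_geom ((hr 0).le.trans (hrc 0)) t fun k _ =>
    (hu k).trans_le <| mul_le_mul_of_nonneg_right (hrc k) (pos_of_succ_eq_mul hu hr h0 k).le

end MulRecurrence

theorem experience_geometric_bound_general
    (Exp ϑ : ℕ → ℝ) (α θco : ℝ)
    (hExp0 : 0 < Exp 0 ∧ Exp 0 < 1)
    (hα : 0 < α ∧ α < 1)
    (hϑ : ∀ t, 1 ≤ t → 0 < ϑ t ∧ ϑ t < 1)
    (hco : ∀ i, 1 ≤ i → θco ≤ ϑ i)
    (hrec : ∀ t, Exp (t + 1) = Exp t + ϑ (t + 1) * α * (1 - Exp t)) :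
    ∀ t, 0 < 1 - Exp t ∧ 1 - Exp t ≤ (1 - Exp 0) * (1 - θco * α) ^ t := by
  have hgap t : 1 - Exp (t + 1) = (1 - ϑ (t + 1) * α) * (1 - Exp t) := by rw [hrec]; ring
  have hfactor t : 0 < 1 - ϑ (t + 1) * α := by
    obtain ⟨hpos, hlt⟩ := hϑ (t + 1) t.succ_pos
    exact sub_pos.2 (mul_lt_one_of_nonneg_of_lt_one_left hpos.le hlt hα.2.le)
  have hfactor_le t : 1 - ϑ (t + 1) * α ≤ 1 - θco * α :=
    sub_le_sub_left (mul_le_mul_of_nonneg_right (hco (t + 1) t.succ_pos) hα.1.le) 1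
  have h0 : 0 < 1 - Exp 0 := sub_pos.2 hExp0.2
  intro t
  refine ⟨pos_of_succ_eq_mul (u := fun t => 1 - Exp t) hgap hfactor h0 t, ?_⟩
  rw [mul_comm]
  exact le_pow_mul_of_succ_eq_mul (u := fun t => 1 - Exp t) hgap hfactor hfactor_le h0 t

/-- If every interaction score is at least the cooperative threshold,
i.e. `ϑ i ≥ θco` for all `i ≥ 1` with `0 < θco < 1`, then the Experience value satisfies
the geometric bound `0 < 1 - Exp t ≤ (1 - Exp 0) * (1 - θco * α) ^ t` for every `t ≥ 0`. -/
theorem experience_geometric_bound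
    (Exp ϑ : ℕ → ℝ) (α θco : ℝ)
    (hExp0 : 0 < Exp 0 ∧ Exp 0 < 1)
    (hα : 0 < α ∧ α < 1)
    (hϑ : ∀ t, 1 ≤ t → 0 < ϑ t ∧ ϑ t < 1)
    (hθco : 0 < θco ∧ θco < 1)
    (hco : ∀ i, 1 ≤ i → θco ≤ ϑ i)
    (hrec : ∀ t, Exp (t + 1) = Exp t + ϑ (t + 1) * α * (1 - Exp t)) :
    ∀ t, 0 < 1 - Exp t ∧ 1 - Exp t ≤ (1 - Exp 0) * (1 - θco * α) ^ t :=
  experience_geometric_bound_general Exp ϑ α θco hExp0 hα hϑ hco hrec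
end

section
/- If every interaction score is at least the cooperative threshold θ_co, then for every ε with 0 < ε < 1 there exists a time T such that for all t ≥ T the Experience value satisfies Exp_t ≥ 1 - ε; i.e., any prescribed Experience level below 1 is attained after finitely many cooperative interactions. -/
/-!
Writing `e t = 1 - Exp t`, the recursion reads `e (t + 1) = (1 - ϑ (t + 1) * α) * e t`, and
cooperation confines every factor to `[0, 1 - θco * α]`. Hence `|e t|` decays at least
geometrically and `Exp t → 1`.
-/

open Filter Topology

theorem tendsto_zero_of_abs_succ_le_mul {u : ℕ → ℝ} {r : ℝ} (hr₀ : 0 ≤ r) (hr₁ : r < 1)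
    (h : ∀ n, |u (n + 1)| ≤ r * |u n|) : Tendsto u atTop (𝓝 0) := by
  refine squeeze_zero_norm (a := fun n ↦ r ^ n * |u 0|)
    (fun n ↦ le_geom (u := fun n ↦ |u n|) hr₀ n fun k _ ↦ h k) ?_
  simpa using (tendsto_pow_atTop_nhds_zero_of_lt_one hr₀ hr₁).mul_const |u 0|

theorem abs_one_sub_update_le {x ϑ α θ : ℝ} (hα₀ : 0 ≤ α) (hα₁ : α ≤ 1) (hϑ : ϑ ≤ 1)
    (hθ : θ ≤ ϑ) : |1 - (x + ϑ * α * (1 - x))| ≤ (1 - θ * α) * |1 - x| := by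
  have hfactor : 0 ≤ 1 - ϑ * α := by nlinarith
  calc |1 - (x + ϑ * α * (1 - x))| = (1 - ϑ * α) * |1 - x| := by
        rw [show 1 - (x + ϑ * α * (1 - x)) = (1 - ϑ * α) * (1 - x) by ring, abs_mul,
          abs_of_nonneg hfactor]
    _ ≤ (1 - θ * α) * |1 - x| := by gcongr

theorem experience_reaches_any_level_general
    (Exp ϑ : ℕ → ℝ) (α θco : ℝ)
    (hα : 0 < α ∧ α < 1)
    (hϑ : ∀ t, 1 ≤ t → 0 < ϑ t ∧ ϑ t < 1)
    (hθco : 0 < θco ∧ θco < 1)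
    (hco : ∀ t, 1 ≤ t → θco ≤ ϑ t)
    (hrec : ∀ t, Exp (t + 1) = Exp t + ϑ (t + 1) * α * (1 - Exp t)) :
    ∀ ε : ℝ, 0 < ε → ε < 1 → ∃ T : ℕ, ∀ t, T ≤ t → 1 - ε ≤ Exp t := by
  intro ε hε _
  have hr₀ : 0 ≤ 1 - θco * α := by nlinarith
  have hr₁ : 1 - θco * α < 1 := sub_lt_self 1 (mul_pos hθco.1 hα.1)
  have hgap : Tendsto (fun t ↦ 1 - Exp t) atTop (𝓝 0) :=
    tendsto_zero_of_abs_succ_le_mul hr₀ hr₁ fun t ↦ by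
      rw [hrec]
      exact abs_one_sub_update_le hα.1.le hα.2.le (hϑ (t + 1) (by omega)).2.le
        (hco (t + 1) (by omega))
  have hlim : Tendsto Exp atTop (𝓝 1) := by
    simpa using (tendsto_const_nhds (x := (1 : ℝ))).sub hgap
  exact eventually_atTop.1 (hlim.eventually (eventually_ge_nhds (by linarith)))

/-- If every interaction score is at least the cooperative threshold `θco`,
then for every `ε` with `0 < ε < 1` there exists a time `T` such that for all `t ≥ T`
the Experience value satisfies `Exp t ≥ 1 - ε`. -/
theorem experience_reaches_any_level
    (Exp ϑ : ℕ → ℝ) (α θco : ℝ)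
    (hExp0 : 0 < Exp 0 ∧ Exp 0 < 1)
    (hα : 0 < α ∧ α < 1)
    (hϑ : ∀ t, 1 ≤ t → 0 < ϑ t ∧ ϑ t < 1)
    (hθco : 0 < θco ∧ θco < 1)
    (hco : ∀ t, 1 ≤ t → θco ≤ ϑ t)
    (hrec : ∀ t, Exp (t + 1) = Exp t + ϑ (t + 1) * α * (1 - Exp t)) :
    ∀ ε : ℝ, 0 < ε → ε < 1 → ∃ T : ℕ, ∀ t, T ≤ t → 1 - ε ≤ Exp t :=
  experience_reaches_any_level_general Exp ϑ α θco hα hϑ hθco hco hrec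
end

section
/- Power iteration for the PageRank-style reputation matrix converges geometrically: if r is a probability vector with A·r = r, then for every probability vector x and every k ≥ 0, ‖A^k·x - r‖₁ ≤ d^k·‖x - r‖₁; consequently the iterates A^k·x converge to r as k → ∞, justifying the iterative computation of the reputation vector. -/
/-!
On vectors with zero sum the rank-one term `((1 - d) / N) • E` of `A` vanishes, so `A` acts there
as `d • W`, and `W` keeps the sum zero. Since `A r = r` and `x - r` has zero sum,
`A^k x - r = A^k (x - r) = d^k W^k (x - r)`, and the nonnegative column-stochastic `W^k` does not
increase the `ℓ¹` norm.
-/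

open Filter Topology Finset

namespace Matrix

variable {R n : Type*} [Fintype n]

section CommSemiring

variable [CommSemiring R] {E W : Matrix n n R} {v : n → R}

lemma add_smul_mulVec_of_sum_eq_zero (hE : ∀ i j, E i j = 1) (hv : ∑ i, v i = 0) (c d : R) :
    (c • E + d • W) *ᵥ v = d • (W *ᵥ v) := by
  have hEv : E *ᵥ v = 0 := funext fun i => by simp [mulVec, dotProduct, hE, hv]
  rw [add_mulVec, smul_mulVec, smul_mulVec, hEv, smul_zero, zero_add]

lemma sum_mulVec_of_one_vecMul (hW : 1 ᵥ* W = 1) (v : n → R) :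
    ∑ i, (W *ᵥ v) i = ∑ i, v i := by
  rw [← one_dotProduct, dotProduct_mulVec, hW, one_dotProduct]

end CommSemiring

variable [DecidableEq n]

lemma pow_mulVec_eq_of_mulVec_eq [Semiring R] {M : Matrix n n R} {v : n → R}
    (h : M *ᵥ v = v) (k : ℕ) : M ^ k *ᵥ v = v := by
  induction k with
  | zero => exact one_mulVec v
  | succ k ih => rw [pow_succ, ← mulVec_mulVec, h, ih]

section CommSemiring

variable [CommSemiring R] {E W : Matrix n n R} {v : n → R}

lemma add_smul_pow_mulVec_of_sum_eq_zero (hE : ∀ i j, E i j = 1) (hW : 1 ᵥ* W = 1)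
    (c d : R) (k : ℕ) (hv : ∑ i, v i = 0) :
    (c • E + d • W) ^ k *ᵥ v = d ^ k • (W ^ k *ᵥ v) := by
  induction k generalizing v with
  | zero => simp
  | succ k ih =>
    have hWv : ∑ i, (W *ᵥ v) i = 0 := (sum_mulVec_of_one_vecMul hW v).trans hv
    rw [pow_succ, ← mulVec_mulVec, add_smul_mulVec_of_sum_eq_zero hE hv, mulVec_smul, ih hWv,
      smul_smul, mulVec_mulVec, ← pow_succ, ← pow_succ']

end CommSemiring

section LinearOrder

variable [CommRing R] [LinearOrder R] [IsOrderedRing R]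

lemma sum_abs_mulVec_le_of_mem_colStochastic {M : Matrix n n R} (hM : M ∈ colStochastic R n)
    (x : n → R) : ∑ i, |(M *ᵥ x) i| ≤ ∑ i, |x i| :=
  calc ∑ i, |(M *ᵥ x) i| ≤ ∑ i, ∑ j, M i j * |x j| := by
        gcongr with i
        refine (abs_sum_le_sum_abs _ _).trans_eq (sum_congr rfl fun j _ => ?_)
        rw [abs_mul, abs_of_nonneg (hM.1 i j)]
    _ = ∑ j, |x j| := by
        rw [sum_comm]
        simp [← sum_mul, sum_col_of_mem_colStochastic hM]

theorem sum_abs_add_smul_pow_mulVec_sub_le {E W : Matrix n n R} (hE : ∀ i j, E i j = 1)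
    (hW : W ∈ colStochastic R n) {c d : R} (hd : 0 ≤ d) {x r : n → R}
    (hr : (c • E + d • W) *ᵥ r = r) (hxr : ∑ i, x i = ∑ i, r i) (k : ℕ) :
    ∑ i, |((c • E + d • W) ^ k *ᵥ x) i - r i| ≤ d ^ k * ∑ i, |x i - r i| := by
  have hxr₀ : ∑ i, (x - r) i = 0 := by simp [sum_sub_distrib, hxr]
  have hpow : (c • E + d • W) ^ k *ᵥ x - r = d ^ k • (W ^ k *ᵥ (x - r)) := by
    rw [← add_smul_pow_mulVec_of_sum_eq_zero hE hW.2 c d k hxr₀, mulVec_sub,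
      pow_mulVec_eq_of_mulVec_eq hr]
  calc ∑ i, |((c • E + d • W) ^ k *ᵥ x) i - r i|
      = d ^ k * ∑ i, |(W ^ k *ᵥ (x - r)) i| := by
        simp only [← Pi.sub_apply _ r, hpow, Pi.smul_apply, smul_eq_mul, abs_mul,
          abs_of_nonneg (pow_nonneg hd k), mul_sum]
    _ ≤ d ^ k * ∑ i, |x i - r i| := by
        exact mul_le_mul_of_nonneg_left
          (sum_abs_mulVec_le_of_mem_colStochastic (pow_mem hW k) (x - r)) (pow_nonneg hd k)

end LinearOrder

end Matrix

lemma tendsto_pi_of_sum_abs_sub_le {α ι : Type*} [Fintype ι] {l : Filter α} {f : α → ι → ℝ}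
    {r : ι → ℝ} {u : α → ℝ} (h : ∀ a, ∑ i, |f a i - r i| ≤ u a) (hu : Tendsto u l (𝓝 0)) :
    Tendsto f l (𝓝 r) := by
  refine tendsto_pi_nhds.2 fun i => tendsto_iff_norm_sub_tendsto_zero.2 ?_
  refine squeeze_zero (fun _ => norm_nonneg _) (fun a => ?_) hu
  exact (single_le_sum (f := fun j => |f a j - r j|) (fun j _ => abs_nonneg _) (mem_univ i)).trans
    (h a)

theorem pagerank_power_iteration_converges_general
    (N : ℕ)
    (W : Matrix (Fin N) (Fin N) ℝ)
    (hWnonneg : ∀ i j, 0 ≤ W i j)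
    (hWcol : ∀ j, ∑ i, W i j = 1)
    (d : ℝ) (hd : 0 < d ∧ d < 1)
    (E A : Matrix (Fin N) (Fin N) ℝ)
    (hE : ∀ i j, E i j = 1)
    (hA : A = ((1 - d) / (N : ℝ)) • E + d • W)
    (r : Fin N → ℝ)
    (hr : (∀ i, 0 ≤ r i) ∧ (∑ i, r i = 1) ∧ A.mulVec r = r) :
    ∀ x : Fin N → ℝ, (∀ i, 0 ≤ x i) → (∑ i, x i = 1) →
      (∀ k : ℕ, ∑ i, |(A ^ k).mulVec x i - r i| ≤ d ^ k * ∑ i, |x i - r i|) ∧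
      Tendsto (fun k : ℕ => (A ^ k).mulVec x) atTop (nhds r) := by
  intro x _ hx
  obtain ⟨-, hrsum, hrfix⟩ := hr
  subst hA
  have hW : W ∈ Matrix.colStochastic ℝ (Fin N) :=
    Matrix.mem_colStochastic_iff_sum.2 ⟨hWnonneg, hWcol⟩
  have hbound := Matrix.sum_abs_add_smul_pow_mulVec_sub_le hE hW hd.1.le hrfix
    (hx.trans hrsum.symm)
  refine ⟨hbound, tendsto_pi_of_sum_abs_sub_le hbound ?_⟩
  simpa using (tendsto_pow_atTop_nhds_zero_of_lt_one hd.1.le hd.2).mul_const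
    (∑ i, |x i - r i|)

/-- Power iteration for the PageRank-style reputation matrix converges
geometrically: if `r` is a probability vector with `A·r = r`, then for every probability
vector `x` and every `k ≥ 0`, `‖A^k·x - r‖₁ ≤ d^k·‖x - r‖₁`; consequently the iterates
`A^k·x` converge to `r` as `k → ∞`. -/
theorem pagerank_power_iteration_converges
    (N : ℕ) (hN : 1 ≤ N)
    (W : Matrix (Fin N) (Fin N) ℝ)
    (hWnonneg : ∀ i j, 0 ≤ W i j)
    (hWcol : ∀ j, ∑ i, W i j = 1)
    (d : ℝ) (hd : 0 < d ∧ d < 1)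
    (E A : Matrix (Fin N) (Fin N) ℝ)
    (hE : ∀ i j, E i j = 1)
    (hA : A = ((1 - d) / (N : ℝ)) • E + d • W)
    (r : Fin N → ℝ)
    (hr : (∀ i, 0 ≤ r i) ∧ (∑ i, r i = 1) ∧ A.mulVec r = r) :
    ∀ x : Fin N → ℝ, (∀ i, 0 ≤ x i) → (∑ i, x i = 1) →
      (∀ k : ℕ, ∑ i, |(A ^ k).mulVec x i - r i| ≤ d ^ k * ∑ i, |x i - r i|) ∧
      Tendsto (fun k : ℕ => (A ^ k).mulVec x) atTop (nhds r) :=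
  pagerank_power_iteration_converges_general N W hWnonneg hWcol d hd E A hE hA r hr
end
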